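/- arXiv:2310.07034 — 3 statements merged into one kernel-verified Lean document; each statement's English description precedes it below -/
import Mathlib

section
/- Let T : X → X be continuous on a compact metric space, φ : X → ℝ continuous. If φ is hyperbolic, i.e., sup over invariant probabilities μ of ∫φ dμ < P_top(T, φ), then lim_n (1/n) log ‖e^{S_nφ}‖_∞ < P_top(T, φ), where S_nφ = Σ_{i=0}^{n−1} φ∘T^i. Equivalently, if lim_n (1/n) sup_x S_nφ(x) ≥ P_top(T, φ), then there exists an invariant probability η with ∫φ dη = P_top(T, φ), so φ is not hyperbolic. -/
/-!
Suppose the normalized maxima `(1/n) max S_nφ` exceed some `c' > c` for infinitely many `n`,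
and let `x_n` be maximizing points. The empirical measures `(1/n) ∑_{i<n} δ_{T^i x_n}` have a
cluster point `η` along those `n`, because probability measures on a compact space form a
compact space. Pushing an empirical measure forward by `T` only moves its integrals by
`O(1/n)`, so `η` is `T`-invariant, and `∫ φ dη ≥ c'`, contradicting `∫ φ dμ ≤ c` for all
invariant `μ`.
-/

open MeasureTheory Filter Topology
open scoped NNReal

section BirkhoffAverage

variable {α E 𝕜 : Type*} [RCLike 𝕜] [NormedAddCommGroup E] [NormedSpace 𝕜 E]

theorem birkhoffAverage_comp_apply {R M : Type*} [DivisionSemiring R] [AddCommMonoid M]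
    [Module R M] (f : α → α) (g : α → M) (n : ℕ) (x : α) :
    birkhoffAverage R f (g ∘ f) n x = birkhoffAverage R f g n (f x) := by
  simp [birkhoffAverage, birkhoffSum, ← Function.iterate_succ_apply' f,
    Function.iterate_succ_apply]

theorem norm_birkhoffAverage_le {f : α → α} {g : α → E} {C : ℝ} (hg : ∀ y, ‖g y‖ ≤ C)
    (n : ℕ) (x : α) : ‖birkhoffAverage 𝕜 f g n x‖ ≤ C := by
  rcases eq_or_ne n 0 with rfl | hn
  · simpa using (norm_nonneg _).trans (hg x)
  calc ‖birkhoffAverage 𝕜 f g n x‖ ≤ (n : ℝ)⁻¹ * ∑ k ∈ Finset.range n, ‖g (f^[k] x)‖ := by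
        rw [birkhoffAverage, birkhoffSum, norm_smul, norm_inv, RCLike.norm_natCast]
        gcongr
        exact norm_sum_le _ _
    _ ≤ (n : ℝ)⁻¹ * (n * C) := by
        gcongr
        exact (Finset.sum_le_sum fun k _ ↦ hg (f^[k] x)).trans_eq (by simp)
    _ = C := by field_simp

theorem tendsto_birkhoffAverage_apply_sub_birkhoffAverage_of_isBounded {g : α → E}
    (h : Bornology.IsBounded (Set.range g)) (f : α → α) (x : ℕ → α) :
    Tendsto (fun n ↦ birkhoffAverage 𝕜 f g n (f (x n)) - birkhoffAverage 𝕜 f g n (x n))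
      atTop (𝓝 0) := by
  obtain ⟨C, hC⟩ := Metric.isBounded_range_iff.1 h
  have hC_div : Tendsto (fun n : ℕ ↦ C / n) atTop (𝓝 0) :=
    tendsto_const_nhds.div_atTop tendsto_natCast_atTop_atTop
  refine squeeze_zero_norm (fun n ↦ ?_) hC_div
  rw [← dist_eq_norm, dist_birkhoffAverage_apply_birkhoffAverage]
  gcongr
  exact hC _ _

end BirkhoffAverage

theorem exists_birkhoffSum_eq_iSup {X : Type*} [TopologicalSpace X] [CompactSpace X]
    [Nonempty X] {T : X → X} (hT : Continuous T) {φ : X → ℝ} (hφ : Continuous φ) (n : ℕ) :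
    ∃ x, ⨆ y, birkhoffSum T φ n y = birkhoffSum T φ n x := by
  have hcont : Continuous (birkhoffSum T φ n) :=
    continuous_finsetSum _ fun k _ ↦ hφ.comp (hT.iterate k)
  obtain ⟨x, -, hx⟩ := isCompact_univ.exists_sSup_image_eq Set.univ_nonempty hcont.continuousOn
  exact ⟨x, by rwa [Set.image_univ, sSup_range] at hx⟩

section EmpiricalMeasure

variable {X : Type*} [MeasurableSpace X]

noncomputable def empiricalMeasure (T : X → X) (x : X) (n : ℕ) : FiniteMeasure X :=
  ⟨(n : ℝ≥0)⁻¹ • ∑ k ∈ Finset.range n, Measure.dirac (T^[k] x), inferInstance⟩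

theorem mass_empiricalMeasure (T : X → X) (x : X) {n : ℕ} (hn : n ≠ 0) :
    (empiricalMeasure T x n).mass = 1 := by
  apply ENNReal.coe_injective
  rw [FiniteMeasure.ennreal_mass]
  simp only [empiricalMeasure, FiniteMeasure.toMeasure_mk, Measure.smul_apply,
    Measure.coe_finsetSum, Finset.sum_apply, measure_univ, Finset.sum_const, Finset.card_range]
  rw [nsmul_eq_mul, mul_one, ENNReal.smul_def, smul_eq_mul, ← ENNReal.coe_natCast,
    ← ENNReal.coe_mul, inv_mul_cancel₀ (Nat.cast_ne_zero.2 hn)]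

theorem integral_empiricalMeasure [MeasurableSingletonClass X] (T : X → X) (x : X) (n : ℕ)
    (f : X → ℝ) :
    ∫ y, f y ∂(empiricalMeasure T x n : Measure X) = birkhoffAverage ℝ T f n x := by
  rw [empiricalMeasure, FiniteMeasure.toMeasure_mk, integral_smul_nnreal_measure,
    integral_finsetSum_measure]
  · simp [birkhoffAverage, birkhoffSum, NNReal.smul_def]
  · exact fun k _ ↦ integrable_dirac (by simp)

variable [TopologicalSpace X] [TopologicalSpace.MetrizableSpace X] [BorelSpace X]

theorem measurePreserving_of_tendsto_empiricalMeasure {T : X → X} (hT : Continuous T)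
    {l : Filter ℕ} [l.NeBot] (hl : l ≤ atTop) {x : ℕ → X} {η : FiniteMeasure X}
    (h : Tendsto (fun n ↦ empiricalMeasure T (x n) n) l (𝓝 η)) :
    MeasurePreserving T η η := by
  refine ⟨hT.measurable, ext_of_forall_integral_eq_of_IsFiniteMeasure fun f ↦ ?_⟩
  rw [integral_map hT.aemeasurable f.continuous.aestronglyMeasurable]
  have hf := FiniteMeasure.tendsto_iff_forall_integral_tendsto.1 h f
  have hfT := FiniteMeasure.tendsto_iff_forall_integral_tendsto.1 h (f.compContinuous ⟨T, hT⟩)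
  simp only [BoundedContinuousFunction.compContinuous_apply, ContinuousMap.coe_mk,
    integral_empiricalMeasure, ← Function.comp_apply (f := ⇑f) (g := T),
    birkhoffAverage_comp_apply] at hf hfT
  have hdiff := (tendsto_birkhoffAverage_apply_sub_birkhoffAverage_of_isBounded (𝕜 := ℝ)
    f.isBounded_range T x).mono_left hl
  exact sub_eq_zero.1 (tendsto_nhds_unique (hfT.sub hf) hdiff)

theorem exists_measurePreserving_le_integral_of_frequently [CompactSpace X] {T : X → X}
    (hT : Continuous T) {φ : X → ℝ} (hφ : Continuous φ) {x : ℕ → X} {a : ℝ}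
    (h : ∃ᶠ n in atTop, a ≤ birkhoffAverage ℝ T φ n (x n)) :
    ∃ μ : Measure X, IsProbabilityMeasure μ ∧ MeasurePreserving T μ μ ∧ a ≤ ∫ y, φ y ∂μ := by
  set l := atTop ⊓ 𝓟 {n | a ≤ birkhoffAverage ℝ T φ n (x n)}
  have : l.NeBot := frequently_iff_neBot.1 h
  have hmass : ∀ᶠ n in l, empiricalMeasure T (x n) n ∈ {μ : FiniteMeasure X | μ.mass = 1} :=
    inf_le_left (α := Filter ℕ)
      ((eventually_ne_atTop 0).mono fun n hn ↦ mass_empiricalMeasure T _ hn)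
  obtain ⟨η, hη, hcluster⟩ := IsCompact.exists_mapClusterPt
    (isCompact_setOfPred_finiteMeasure_eq_of_compactSpace X 1) (tendsto_principal.2 hmass)
  obtain ⟨U, hUl, hU⟩ := mapClusterPt_iff_ultrafilter.1 hcluster
  have : IsProbabilityMeasure (η : Measure X) :=
    ⟨by rw [← FiniteMeasure.ennreal_mass, hη.out]; rfl⟩
  refine ⟨η, inferInstance,
    measurePreserving_of_tendsto_empiricalMeasure hT (hUl.trans inf_le_left) hU, ?_⟩
  have hφU := FiniteMeasure.tendsto_iff_forall_integral_tendsto.1 hU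
    (BoundedContinuousFunction.mkOfCompact ⟨φ, hφ⟩)
  simp only [BoundedContinuousFunction.mkOfCompact_apply, ContinuousMap.coe_mk,
    integral_empiricalMeasure] at hφU
  exact ge_of_tendsto hφU (hUl.trans inf_le_right (mem_principal_self _))

end EmpiricalMeasure

/-- If `φ` is hyperbolic, i.e. `sup_μ ∫ φ dμ < P = P_top(T, φ)` over invariant
probability measures, then `lim (1/n) log ‖e^{S_nφ}‖_∞ = lim (1/n) sup_x S_nφ(x)`
is strictly smaller than `P`. -/
theorem hyperbolic_potential_birkhoff_sup_lt_pressure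
    {X : Type*} [MetricSpace X] [CompactSpace X] [Nonempty X]
    [MeasurableSpace X] [BorelSpace X]
    (T : X → X) (hT : Continuous T) (φ : X → ℝ) (hφ : Continuous φ)
    (P : ℝ)
    (hhyp : ∃ c : ℝ, c < P ∧ ∀ μ : Measure X, IsProbabilityMeasure μ →
      MeasurePreserving T μ μ → ∫ x, φ x ∂μ ≤ c) :
    limsup (fun n : ℕ => (⨆ x : X, ∑ i ∈ Finset.range n, φ (T^[i] x)) / (n : ℝ)) atTop < P := by
  obtain ⟨c, hcP, hc⟩ := hhyp
  choose x hx using exists_birkhoffSum_eq_iSup hT hφ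
  have hsup : (fun n : ℕ ↦ (⨆ y, ∑ i ∈ Finset.range n, φ (T^[i] y)) / (n : ℝ)) =
      fun n ↦ birkhoffAverage ℝ T φ n (x n) := by
    funext n
    rw [birkhoffAverage, ← hx n, smul_eq_mul, div_eq_inv_mul]
    rfl
  obtain ⟨M, hM⟩ : ∃ M, ∀ y, ‖φ y‖ ≤ M :=
    ⟨_, (BoundedContinuousFunction.mkOfCompact ⟨φ, hφ⟩).norm_coe_le_norm⟩
  have hcobdd : IsCoboundedUnder (· ≤ ·) atTop fun n ↦ birkhoffAverage ℝ T φ n (x n) :=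
    isCoboundedUnder_le_of_le atTop fun n ↦ (abs_le.1 (norm_birkhoffAverage_le hM n (x n))).1
  rw [hsup]
  refine lt_of_not_ge fun hPle ↦ ?_
  obtain ⟨c', hcc', hc'⟩ := exists_between (hcP.trans_le hPle)
  obtain ⟨μ, hμ, hμT, hμφ⟩ := exists_measurePreserving_le_integral_of_frequently hT hφ
    ((frequently_lt_of_lt_limsup hcobdd hc').mono fun n ↦ le_of_lt)
  exact (hcc'.trans_le (hμφ.trans (hc μ hμ hμT))).false
end

section
/- Let T : X → X be continuous on a compact metric space, let φ : X → ℝ be continuous, and let λ : M₁(T) → ℝ be a continuous affine functional; call φ expanding if there is no equilibrium state μ of φ with λ(μ) = 0. Suppose there exists k > 0 with P_top(T, φ) = P_top(T, φ − k·ψ), where ψ ≥ 0 is continuous with ∫ψ dμ = λ(μ) for all invariant μ, that the entropy map is upper semicontinuous (so equilibrium states exist), and that λ(μ) ≥ 0 for all invariant μ. Then there exists an equilibrium state η for φ − kψ with λ(η) = 0, and η is also an equilibrium state of φ; hence φ is not expanding. -/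
open MeasureTheory

/-- Suppose `λ(μ) = ∫ ψ dμ ≥ 0` for all invariant probabilities (`ψ ≥ 0` continuous,
`ψ = log|Df|`), `P_top(T, φ) = P_top(T, φ − kψ)` for some `k > 0`, and an equilibrium
state of `φ − kψ` exists (entropy map upper semicontinuous). Then there exists an
equilibrium state `η` of `φ − kψ` with `λ(η) = 0` which is also an equilibrium state
of `φ`; hence `φ` is not expanding. -/
theorem not_expanding_of_equal_pressures
    {X : Type*} [MetricSpace X] [CompactSpace X] [MeasurableSpace X] [BorelSpace X]
    (T : X → X) (hT : Continuous T)
    (φ ψ : X → ℝ) (hφ : Continuous φ) (hψ : Continuous ψ) (hψ_nonneg : ∀ x, 0 ≤ ψ x)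
    (h : Measure X → ℝ) (P₁ P₂ k : ℝ) (hk : 0 < k)
    (hVP₁ : ∀ μ : Measure X, IsProbabilityMeasure μ → MeasurePreserving T μ μ →
      h μ + ∫ x, φ x ∂μ ≤ P₁)
    (hVP₂ : ∀ μ : Measure X, IsProbabilityMeasure μ → MeasurePreserving T μ μ →
      h μ + ∫ x, (φ x - k * ψ x) ∂μ ≤ P₂)
    (hPP : P₁ = P₂)
    (hlam_nonneg : ∀ μ : Measure X, IsProbabilityMeasure μ → MeasurePreserving T μ μ →
      0 ≤ ∫ x, ψ x ∂μ)
    (hexists : ∃ η : Measure X, IsProbabilityMeasure η ∧ MeasurePreserving T η η ∧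
      h η + ∫ x, (φ x - k * ψ x) ∂η = P₂) :
    ∃ η : Measure X, IsProbabilityMeasure η ∧ MeasurePreserving T η η ∧
      h η + ∫ x, (φ x - k * ψ x) ∂η = P₂ ∧
      ∫ x, ψ x ∂η = 0 ∧
      h η + ∫ x, φ x ∂η = P₁ := by
  obtain ⟨η, hprob, hpres, heq⟩ := hexists
  have hφi : Integrable φ η := hφ.integrable_of_hasCompactSupport (HasCompactSupport.of_compactSpace φ)
  have hψi : Integrable ψ η := hψ.integrable_of_hasCompactSupport (HasCompactSupport.of_compactSpace ψ)
  have hsplit : ∫ x, (φ x - k * ψ x) ∂η = ∫ x, φ x ∂η - k * ∫ x, ψ x ∂η := by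
    rw [integral_sub hφi (hψi.const_mul k), integral_const_mul]
  have hψ0 : ∫ x, ψ x ∂η = 0 := by
    have h1 := hVP₁ η hprob hpres
    have h2 := hlam_nonneg η hprob hpres
    nlinarith [heq, hsplit, hPP]
  refine ⟨η, hprob, hpres, heq, hψ0, ?_⟩
  have : h η + ∫ x, φ x ∂η = h η + ∫ x, (φ x - k * ψ x) ∂η := by
    rw [hsplit, hψ0]; ring
  rw [this, heq, hPP]
end

section
/- Let T : X → X be continuous on a compact metric space with h_top(T) > 0, and φ continuous, t₁ < 0 real. Suppose P_top(T, t₁φ) = t₁β with β = ∫φ dη₁ for an invariant measure η₁ of zero entropy maximizing −φ, and suppose μ* is an invariant measure with h_{μ*}(T) = t₁(β − ∫φ dμ*) =: h* and ∫φ dμ* = λ_min > β. Then for every d ∈ [β, λ_min], the convex combination ν_d := ((d−β)/(λ_min−β)) μ* + (1 − (d−β)/(λ_min−β)) η₁ is T-invariant, satisfies ∫φ dν_d = d and h_{ν_d}(T) = t₁(β − d); moreover every invariant ν with ∫φ dν = d satisfies h_ν(T) ≤ t₁(β − d). Hence sup{h_ν(T) : ∫φ dν = d} = t₁(β − d), i.e.,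 the constrained entropy is affine in d on [β, λ_min]. -/
/-!
The pressure bound `h ν + t₁ ∫φ dν ≤ t₁ β` gives `h ν ≤ t₁ (β - d)` for every invariant `ν` with
`∫φ dν = d`. Along the segment from `η₁` to `μ*` both `ν ↦ ∫φ dν` and the entropy are affine, and
the bound is attained at the two endpoints, so it is attained at `ν_d`.
-/

open MeasureTheory

section ConvexCombination

variable {α : Type*} [MeasurableSpace α] {μ ν : Measure α} {a : ℝ}

lemma isProbabilityMeasure_ofReal_smul_add_ofReal_one_sub_smul
    [IsProbabilityMeasure μ] [IsProbabilityMeasure ν] (ha₀ : 0 ≤ a) (ha₁ : a ≤ 1) :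
    IsProbabilityMeasure (ENNReal.ofReal a • μ + ENNReal.ofReal (1 - a) • ν) where
  measure_univ := by simp [← ENNReal.ofReal_add ha₀ (sub_nonneg.2 ha₁)]

lemma integral_ofReal_smul_add_ofReal_one_sub_smul {E : Type*} [NormedAddCommGroup E]
    [NormedSpace ℝ E] {f : α → E} (hfμ : Integrable f μ) (hfν : Integrable f ν)
    (ha₀ : 0 ≤ a) (ha₁ : a ≤ 1) :
    ∫ x, f x ∂(ENNReal.ofReal a • μ + ENNReal.ofReal (1 - a) • ν) =
      a • ∫ x, f x ∂μ + (1 - a) • ∫ x, f x ∂ν := by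
  rw [integral_add_measure (hfμ.smul_measure ENNReal.ofReal_ne_top)
      (hfν.smul_measure ENNReal.ofReal_ne_top), integral_smul_measure, integral_smul_measure,
    ENNReal.toReal_ofReal ha₀, ENNReal.toReal_ofReal (sub_nonneg.2 ha₁)]

end ConvexCombination

theorem constrained_entropy_affine_general
    {X : Type*} [MetricSpace X] [CompactSpace X] [MeasurableSpace X] [BorelSpace X]
    (T : X → X) (φ : X → ℝ) (hφ : Continuous φ)
    (h : Measure X → ℝ)
    (haff : ∀ a : ℝ, 0 ≤ a → a ≤ 1 → ∀ μ ν : Measure X,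
      IsProbabilityMeasure μ → IsProbabilityMeasure ν →
      MeasurePreserving T μ μ → MeasurePreserving T ν ν →
      h (ENNReal.ofReal a • μ + ENNReal.ofReal (1 - a) • ν) = a * h μ + (1 - a) * h ν)
    (t₁ : ℝ) (β lamMin : ℝ) (hβ_lt : β < lamMin)
    (η₁ : Measure X) (hη₁_prob : IsProbabilityMeasure η₁)
    (hη₁_inv : MeasurePreserving T η₁ η₁) (hη₁_ent : h η₁ = 0)
    (hη₁_int : ∫ x, φ x ∂η₁ = β)
    (hP : ∀ ν : Measure X, IsProbabilityMeasure ν → MeasurePreserving T ν ν →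
      h ν + t₁ * ∫ x, φ x ∂ν ≤ t₁ * β)
    (μs : Measure X) (hμs_prob : IsProbabilityMeasure μs)
    (hμs_inv : MeasurePreserving T μs μs)
    (hμs_int : ∫ x, φ x ∂μs = lamMin) (hμs_ent : h μs = t₁ * (β - lamMin)) :
    ∀ d ∈ Set.Icc β lamMin,
      (IsProbabilityMeasure
          (ENNReal.ofReal ((d - β) / (lamMin - β)) • μs
            + ENNReal.ofReal (1 - (d - β) / (lamMin - β)) • η₁) ∧
        MeasurePreserving T
          (ENNReal.ofReal ((d - β) / (lamMin - β)) • μs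
            + ENNReal.ofReal (1 - (d - β) / (lamMin - β)) • η₁)
          (ENNReal.ofReal ((d - β) / (lamMin - β)) • μs
            + ENNReal.ofReal (1 - (d - β) / (lamMin - β)) • η₁) ∧
        (∫ x, φ x ∂(ENNReal.ofReal ((d - β) / (lamMin - β)) • μs
            + ENNReal.ofReal (1 - (d - β) / (lamMin - β)) • η₁)) = d ∧
        h (ENNReal.ofReal ((d - β) / (lamMin - β)) • μs
            + ENNReal.ofReal (1 - (d - β) / (lamMin - β)) • η₁) = t₁ * (β - d)) ∧
      (∀ ν : Measure X, IsProbabilityMeasure ν → MeasurePreserving T ν ν →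
        ∫ x, φ x ∂ν = d → h ν ≤ t₁ * (β - d)) ∧
      IsGreatest {y : ℝ | ∃ ν : Measure X, IsProbabilityMeasure ν ∧
        MeasurePreserving T ν ν ∧ ∫ x, φ x ∂ν = d ∧ h ν = y} (t₁ * (β - d)) := by
  intro d ⟨hβd, hdL⟩
  set a : ℝ := (d - β) / (lamMin - β)
  have hgap : 0 < lamMin - β := sub_pos.2 hβ_lt
  have ha₀ : 0 ≤ a := div_nonneg (sub_nonneg.2 hβd) hgap.le
  have ha₁ : a ≤ 1 := (div_le_one hgap).2 (by linarith)
  have hscale : a * (lamMin - β) = d - β := div_mul_cancel₀ _ hgap.ne'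
  have hφint : ∀ ν : Measure X, IsProbabilityMeasure ν → Integrable φ ν := fun _ _ ↦
    hφ.integrable_of_hasCompactSupport (.of_compactSpace φ)
  have hprob := isProbabilityMeasure_ofReal_smul_add_ofReal_one_sub_smul
    (μ := μs) (ν := η₁) ha₀ ha₁
  have hinv := (hμs_inv.smul_measure (ENNReal.ofReal a)).add_measure
    (hη₁_inv.smul_measure (ENNReal.ofReal (1 - a)))
  have hint : ∫ x, φ x ∂(ENNReal.ofReal a • μs + ENNReal.ofReal (1 - a) • η₁) = d := by
    rw [integral_ofReal_smul_add_ofReal_one_sub_smul (hφint μs hμs_prob) (hφint η₁ hη₁_prob)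
      ha₀ ha₁, hμs_int, hη₁_int, smul_eq_mul, smul_eq_mul]
    linear_combination hscale
  have hent : h (ENNReal.ofReal a • μs + ENNReal.ofReal (1 - a) • η₁) = t₁ * (β - d) := by
    rw [haff a ha₀ ha₁ μs η₁ hμs_prob hη₁_prob hμs_inv hη₁_inv, hμs_ent, hη₁_ent]
    linear_combination (-t₁) * hscale
  have hbound : ∀ ν : Measure X, IsProbabilityMeasure ν → MeasurePreserving T ν ν →
      ∫ x, φ x ∂ν = d → h ν ≤ t₁ * (β - d) := fun ν hν hνinv hνint ↦ by
    linarith [hνint ▸ hP ν hν hνinv]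
  exact ⟨⟨hprob, hinv, hint, hent⟩, hbound, ⟨_, hprob, hinv, hint, hent⟩,
    fun _ ⟨ν, hν, hνinv, hνint, hy⟩ ↦ hy ▸ hbound ν hν hνinv hνint⟩

/-- Affine interpolation of constrained entropy: if `η₁` is an invariant measure of
zero entropy maximizing `−φ` with `∫φ dη₁ = β`, `P_top(T, t₁φ) = t₁β` (as an upper
bound over invariant measures) with `t₁ < 0`, and `μ*` is invariant with
`∫φ dμ* = λ_min > β` and `h(μ*) = t₁(β − λ_min)`, then for every `d ∈ [β, λ_min]`
the convex combination `ν_d = a μ* + (1−a) η₁`, `a = (d−β)/(λ_min−β)`, is an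
invariant probability with `∫φ dν_d = d` and `h(ν_d) = t₁(β − d)`, every invariant
`ν` with `∫φ dν = d` has `h(ν) ≤ t₁(β − d)`, and hence
`sup{h(ν) : ∫φ dν = d} = t₁(β − d)`. -/
theorem constrained_entropy_affine
    {X : Type*} [MetricSpace X] [CompactSpace X] [MeasurableSpace X] [BorelSpace X]
    (T : X → X) (hT : Continuous T) (φ : X → ℝ) (hφ : Continuous φ)
    (h : Measure X → ℝ)
    (htop : ℝ) (htop_pos : 0 < htop)
    (haff : ∀ a : ℝ, 0 ≤ a → a ≤ 1 → ∀ μ ν : Measure X,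
      IsProbabilityMeasure μ → IsProbabilityMeasure ν →
      MeasurePreserving T μ μ → MeasurePreserving T ν ν →
      h (ENNReal.ofReal a • μ + ENNReal.ofReal (1 - a) • ν) = a * h μ + (1 - a) * h ν)
    (t₁ : ℝ) (ht₁ : t₁ < 0) (β lamMin : ℝ) (hβ_lt : β < lamMin)
    (η₁ : Measure X) (hη₁_prob : IsProbabilityMeasure η₁)
    (hη₁_inv : MeasurePreserving T η₁ η₁) (hη₁_ent : h η₁ = 0)
    (hη₁_int : ∫ x, φ x ∂η₁ = β)
    (hη₁_max : ∀ ν : Measure X, IsProbabilityMeasure ν → MeasurePreserving T ν ν →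
      ∫ x, -φ x ∂ν ≤ ∫ x, -φ x ∂η₁)
    (hP : ∀ ν : Measure X, IsProbabilityMeasure ν → MeasurePreserving T ν ν →
      h ν + t₁ * ∫ x, φ x ∂ν ≤ t₁ * β)
    (μs : Measure X) (hμs_prob : IsProbabilityMeasure μs)
    (hμs_inv : MeasurePreserving T μs μs)
    (hμs_int : ∫ x, φ x ∂μs = lamMin) (hμs_ent : h μs = t₁ * (β - lamMin)) :
    ∀ d ∈ Set.Icc β lamMin,
      (IsProbabilityMeasure
          (ENNReal.ofReal ((d - β) / (lamMin - β)) • μs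
            + ENNReal.ofReal (1 - (d - β) / (lamMin - β)) • η₁) ∧
        MeasurePreserving T
          (ENNReal.ofReal ((d - β) / (lamMin - β)) • μs
            + ENNReal.ofReal (1 - (d - β) / (lamMin - β)) • η₁)
          (ENNReal.ofReal ((d - β) / (lamMin - β)) • μs
            + ENNReal.ofReal (1 - (d - β) / (lamMin - β)) • η₁) ∧
        (∫ x, φ x ∂(ENNReal.ofReal ((d - β) / (lamMin - β)) • μs
            + ENNReal.ofReal (1 - (d - β) / (lamMin - β)) • η₁)) = d ∧
        h (ENNReal.ofReal ((d - β) / (lamMin - β)) • μs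
            + ENNReal.ofReal (1 - (d - β) / (lamMin - β)) • η₁) = t₁ * (β - d)) ∧
      (∀ ν : Measure X, IsProbabilityMeasure ν → MeasurePreserving T ν ν →
        ∫ x, φ x ∂ν = d → h ν ≤ t₁ * (β - d)) ∧
      IsGreatest {y : ℝ | ∃ ν : Measure X, IsProbabilityMeasure ν ∧
        MeasurePreserving T ν ν ∧ ∫ x, φ x ∂ν = d ∧ h ν = y} (t₁ * (β - d)) :=
  constrained_entropy_affine_general T φ hφ h haff t₁ β lamMin hβ_lt η₁ hη₁_prob hη₁_inv hη₁_ent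
    hη₁_int hP μs hμs_prob hμs_inv hμs_int hμs_ent
end
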